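/- For 1 ≤ k < n, the total number of runs of ones of length exactly k, summed over all binary strings of length n, equals (n-k+3)·2^(n-k-2); and for k = n it equals 1. -/
import Mathlib


/-- The maximal runs of a binary string, as a list of (bit, length) pairs,
from left to right. -/
def runs : List Bool → List (Bool × ℕ)
  | [] => []
  | b :: l =>
    match runs l with
    | [] => [(b, 1)]
    | (c, k) :: rest => if b = c then (c, k + 1) :: rest else (b, 1) :: (c, k) :: rest

/-- The lengths of the maximal runs of ones (nonnull runs of ones) of a binary string. -/
def oneRuns (l : List Bool) : List ℕ :=
  (runs l).filterMap fun p => if p.1 then some p.2 else none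


lemma runs_cons_eq (b : Bool) (l : List Bool) : runs (b :: l) =
    match runs l with
    | [] => [(b, 1)]
    | (c, k) :: rest => if b = c then (c, k + 1) :: rest else (b, 1) :: (c, k) :: rest := rfl

def lead (l : List Bool) : ℕ := (l.takeWhile id).length

@[simp] lemma lead_nil : lead [] = 0 := rfl
@[simp] lemma lead_false (l : List Bool) : lead (false :: l) = 0 := rfl
@[simp] lemma lead_true (l : List Bool) : lead (true :: l) = lead l + 1 := by
  simp [lead, List.takeWhile]

lemma runs_cons (b : Bool) (l : List Bool) : ∃ m s, runs (b :: l) = (b, m) :: s := by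
  rcases h : runs l with _ | ⟨⟨c, k⟩, rest⟩
  · exact ⟨1, [], by simp [runs, h]⟩
  · by_cases hbc : b = c
    · exact ⟨k + 1, rest, by subst hbc; simp [runs, h]⟩
    · exact ⟨1, (c, k) :: rest, by simp [runs, h, hbc]⟩

lemma oneRuns_false (l : List Bool) : oneRuns (false :: l) = oneRuns l := by
  rcases h : runs l with _ | ⟨⟨c, k⟩, rest⟩
  · simp [oneRuns, runs, h]
  · cases c
    · simp [oneRuns, runs, h]
    · simp [oneRuns, runs, h]

lemma runs_true (l : List Bool) : ∃ t, runs (true :: l) = (true, lead l + 1) :: t ∧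
    oneRuns l = if lead l = 0 then t.filterMap (fun p => if p.1 then some p.2 else none)
      else lead l :: t.filterMap (fun p => if p.1 then some p.2 else none) := by
  induction l with
  | nil => exact ⟨[], by simp [runs, oneRuns]⟩
  | cons b l ih =>
    cases b
    · refine ⟨runs (false :: l), ?_, ?_⟩
      · obtain ⟨m, s, hs⟩ := runs_cons false l
        rw [runs_cons_eq, hs]
        simp
      · simp [oneRuns_false, oneRuns]
    · obtain ⟨t, ht, ho⟩ := ih
      refine ⟨t, ?_, ?_⟩
      · rw [runs_cons_eq, ht]
        simp
      · simp only [lead_true]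
        rw [if_neg (by omega)]
        simp only [oneRuns, ht, List.filterMap_cons]
        simp

lemma count_true (l : List Bool) (k : ℕ) (hk : 1 ≤ k) :
    (oneRuns (true :: l)).count k + (if lead l = k then 1 else 0)
      = (oneRuns l).count k + (if lead l + 1 = k then 1 else 0) := by
  obtain ⟨t, ht, ho⟩ := runs_true l
  have h1 : oneRuns (true :: l)
      = (lead l + 1) :: t.filterMap (fun p => if p.1 then some p.2 else none) := by
    simp [oneRuns, ht]
  rw [h1, ho]
  by_cases h0 : lead l = 0
  · rw [if_pos h0, h0]
    simp [List.count_cons]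
    omega
  · rw [if_neg h0]
    simp [List.count_cons]
    omega

def G (n k : ℕ) : ℕ := ∑ s : Fin n → Bool, (oneRuns (List.ofFn s)).count k
def Acnt (n j : ℕ) : ℕ := ∑ s : Fin n → Bool, if lead (List.ofFn s) = j then 1 else 0

lemma sum_split (n : ℕ) (g : List Bool → ℕ) :
    ∑ s : Fin (n + 1) → Bool, g (List.ofFn s)
      = ∑ s : Fin n → Bool, (g (false :: List.ofFn s) + g (true :: List.ofFn s)) := by
  rw [← (Fin.consEquiv (fun _ : Fin (n+1) => Bool)).sum_comp (fun s => g (List.ofFn s))]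
  rw [Fintype.sum_prod_type]
  rw [Fintype.sum_bool]
  rw [← Finset.sum_add_distrib]
  refine Finset.sum_congr rfl fun s _ => ?_
  have h : ∀ b : Bool, List.ofFn (Fin.consEquiv (fun _ : Fin (n+1) => Bool) (b, s))
      = b :: List.ofFn s := by
    intro b
    rw [List.ofFn_succ]
    simp [Fin.consEquiv]
  rw [h true, h false]
  omega

@[simp] lemma Acnt_zero_zero : Acnt 0 0 = 1 := by simp [Acnt, lead]
@[simp] lemma Acnt_zero_succ (j : ℕ) : Acnt 0 (j + 1) = 0 := by simp [Acnt, lead]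
lemma Acnt_succ_zero (n : ℕ) : Acnt (n + 1) 0 = 2 ^ n := by
  rw [Acnt, sum_split n (fun l => if lead l = 0 then 1 else 0)]
  simp [Finset.card_univ]
lemma Acnt_succ_succ (n j : ℕ) : Acnt (n + 1) (j + 1) = Acnt n j := by
  rw [Acnt, sum_split n (fun l => if lead l = (j+1) then 1 else 0)]
  simp [Acnt]

lemma Acnt_diag (n : ℕ) : Acnt n n = 1 := by
  induction n with
  | zero => simp
  | succ n ih => rw [Acnt_succ_succ, ih]

lemma Acnt_gt (n j : ℕ) (h : n < j) : Acnt n j = 0 := by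
  induction n generalizing j with
  | zero => obtain ⟨j, rfl⟩ : ∃ m, j = m + 1 := ⟨j - 1, by omega⟩; simp
  | succ n ih =>
    obtain ⟨j, rfl⟩ : ∃ m, j = m + 1 := ⟨j - 1, by omega⟩
    rw [Acnt_succ_succ]; exact ih _ (by omega)

lemma Acnt_lt (n j : ℕ) (h : j < n) : Acnt n j = 2 ^ (n - 1 - j) := by
  induction j generalizing n with
  | zero =>
    obtain ⟨n, rfl⟩ : ∃ m, n = m + 1 := ⟨n - 1, by omega⟩
    simp [Acnt_succ_zero]
  | succ j ih =>
    obtain ⟨n, rfl⟩ : ∃ m, n = m + 1 := ⟨n - 1, by omega⟩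
    rw [Acnt_succ_succ, ih n (by omega)]; congr 1; omega

lemma G_rec (n k : ℕ) (hk : 1 ≤ k) :
    G (n + 1) k + Acnt n k = 2 * G n k + Acnt n (k - 1) := by
  rw [G, sum_split n (fun l => (oneRuns l).count k)]
  rw [Finset.sum_add_distrib, Acnt]
  simp only [oneRuns_false]
  rw [add_assoc, ← Finset.sum_add_distrib]
  have : ∀ s : Fin n → Bool,
      (oneRuns (true :: List.ofFn s)).count k
        + (if lead (List.ofFn s) = k then 1 else 0)
      = (oneRuns (List.ofFn s)).count k
        + (if lead (List.ofFn s) = k - 1 then 1 else 0) := by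
    intro s
    rw [count_true _ _ hk]
    congr 1
    have : (lead (List.ofFn s) + 1 = k) ↔ (lead (List.ofFn s) = k - 1) := by omega
    simp [this]
  rw [Finset.sum_congr rfl (fun s _ => this s), Finset.sum_add_distrib]
  rw [G, Acnt, two_mul]
  ring

@[simp] lemma G_zero (k : ℕ) : G 0 k = 0 := by simp [G, oneRuns, runs]

lemma G_gt (n k : ℕ) (hk : 1 ≤ k) (h : n < k) : G n k = 0 := by
  induction n with
  | zero => simp
  | succ n ih =>
    have h1 := G_rec n k hk
    rw [ih (by omega), Acnt_gt n k (by omega), Acnt_gt n (k-1) (by omega)] at h1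
    omega

lemma G_diag (k : ℕ) (hk : 1 ≤ k) : G k k = 1 := by
  obtain ⟨m, rfl⟩ : ∃ m, k = m + 1 := ⟨k - 1, by omega⟩
  have h1 := G_rec m (m + 1) hk
  rw [G_gt m (m+1) hk (by omega), Acnt_gt m (m+1) (by omega)] at h1
  simp only [Nat.add_sub_cancel, Acnt_diag] at h1
  omega

lemma G_formula (e k : ℕ) (he : 1 ≤ e) (hk : 1 ≤ k) :
    (G (k + e) k : ℚ) = ((e : ℚ) + 3) * 2 ^ ((e : ℤ) - 2) := by
  induction e with
  | zero => omega
  | succ e ih =>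
    rcases Nat.eq_or_lt_of_le he with he1 | he1
    · -- e + 1 = 1, i.e. e = 0
      have he0 : e = 0 := by omega
      subst he0
      have h1 := G_rec k k hk
      rw [G_diag k hk, Acnt_diag, Acnt_lt k (k-1) (by omega)] at h1
      have h2 : k - 1 - (k - 1) = 0 := by omega
      rw [h2] at h1
      have : G (k + 1) k = 2 := by omega
      rw [this]
      push_cast
      rw [zpow_neg_one]
      norm_num
    · have he' : 1 ≤ e := by omega
      have h1 := G_rec (k + e) k hk
      rw [Acnt_lt (k + e) k (by omega), Acnt_lt (k + e) (k - 1) (by omega)] at h1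
      have h2 : k + e - 1 - k = e - 1 := by omega
      have h3 : k + e - 1 - (k - 1) = e := by omega
      rw [h2, h3] at h1
      have hq : (G (k + e + 1) k : ℚ) + 2 ^ (e - 1 : ℕ)
          = 2 * G (k + e) k + 2 ^ (e : ℕ) := by exact_mod_cast congrArg (Nat.cast : ℕ → ℚ) h1
      rw [ih he'] at hq
      have hcast1 : ((2 : ℚ) ^ (e - 1 : ℕ)) = 2 ^ ((e : ℤ) - 1) := by
        rw [← zpow_natCast]
        congr 1
        omega
      have hcast2 : ((2 : ℚ) ^ (e : ℕ)) = 2 ^ ((e : ℤ)) := by rw [← zpow_natCast]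
      rw [hcast1, hcast2] at hq
      have key : (G (k + e + 1) k : ℚ)
          = 2 * (((e : ℚ) + 3) * 2 ^ ((e : ℤ) - 2)) + 2 ^ ((e : ℤ)) - 2 ^ ((e : ℤ) - 1) := by
        linarith
      rw [show k + (e + 1) = k + e + 1 by ring, key]
      have e1 : (2 : ℚ) ^ ((e : ℤ)) = 2 ^ ((e : ℤ) - 2) * 4 := by
        rw [show ((e : ℤ)) = ((e : ℤ) - 2) + 2 by ring, zpow_add₀ (by norm_num : (2:ℚ) ≠ 0)]
        norm_num
      have e2 : (2 : ℚ) ^ ((e : ℤ) - 1) = 2 ^ ((e : ℤ) - 2) * 2 := by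
        rw [show ((e : ℤ) - 1) = ((e : ℤ) - 2) + 1 by ring, zpow_add₀ (by norm_num : (2:ℚ) ≠ 0)]
        norm_num
      have e3 : (2 : ℚ) ^ ((e : ℤ) + 1 - 2) = 2 ^ ((e : ℤ) - 2) * 2 := by
        rw [show ((e : ℤ) + 1 - 2) = ((e : ℤ) - 2) + 1 by ring, zpow_add₀ (by norm_num : (2:ℚ) ≠ 0)]
        norm_num
      push_cast
      rw [e1, e2, e3]
      ring


/-- For `1 ≤ k < n`, the total number of runs of ones of length exactly `k`, summed over
all binary strings of length `n`, equals `(n-k+3) * 2^(n-k-2)`; for `k = n` it equals 1. -/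
theorem stmt7 (n k : ℕ) (hk : 1 ≤ k) (hkn : k ≤ n) :
    (k < n →
      ((∑ s : Fin n → Bool, (oneRuns (List.ofFn s)).count k : ℕ) : ℚ)
        = ((n : ℚ) - k + 3) * 2 ^ ((n : ℤ) - k - 2)) ∧
    (k = n → (∑ s : Fin n → Bool, (oneRuns (List.ofFn s)).count k) = 1) := by
  constructor
  · intro hlt
    obtain ⟨e, rfl⟩ : ∃ e, n = k + e := ⟨n - k, by omega⟩
    have he : 1 ≤ e := by omega
    have := G_formula e k he hk
    rw [G] at this
    rw [this]
    push_cast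
    rw [show ((k : ℚ) + e) - k + 3 = (e : ℚ) + 3 by ring,
        show ((k : ℤ) + e) - k - 2 = (e : ℤ) - 2 by ring]
  · intro heq
    subst heq
    have := G_diag k hk
    rwa [G] at this
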